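/- arXiv:1808.08646 — 13 statements merged into one kernel-verified Lean document; each statement's English description precedes it below -/
import Mathlib

section
/- Let c_A, c_B : ℝ → ℝ be continuous strictly increasing bijections satisfying the cost condition c_A(y) − c_A(x) ≤ c_B(y) − c_B(x) for all x ≤ y, and let τ_B ≤ τ_A be real numbers. Then σ_B ≤ σ_A, where σ_B = c_B⁻¹(c_B(τ_B) + 1) and σ_A = c_A⁻¹(c_A(τ_A) + 1). -/
/-- With strictly increasing continuous cost bijections satisfying the
cost condition and τ_B ≤ τ_A, the perfect-classification thresholds satisfy σ_B ≤ σ_A. -/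
theorem sigmaB_le_sigmaA (cA cB : ℝ → ℝ)
    (hAmono : StrictMono cA) (hBmono : StrictMono cB)
    (hAcont : Continuous cA) (hBcont : Continuous cB)
    (hAbij : Function.Bijective cA) (hBbij : Function.Bijective cB)
    (hcost : ∀ x y : ℝ, x ≤ y → cA y - cA x ≤ cB y - cB x)
    (τA τB : ℝ) (hτ : τB ≤ τA)
    (σA σB : ℝ)
    (hσA : σA = Function.invFun cA (cA τA + 1))
    (hσB : σB = Function.invFun cB (cB τB + 1)) :
    σB ≤ σA := by
  have hA : cA σA = cA τA + 1 := by
    rw [hσA]; exact Function.invFun_eq (hAbij.surjective _)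
  have hB : cB σB = cB τB + 1 := by
    rw [hσB]; exact Function.invFun_eq (hBbij.surjective _)
  have hτAσA : τA ≤ σA := by
    by_contra h
    push_neg at h
    have := hAmono h
    linarith
  have h1 : cA σA - cA τB ≤ cB σA - cB τB := hcost τB σA (hτ.trans hτAσA)
  have h2 : cA τB ≤ cA τA := hAmono.monotone hτ
  have : cB σB ≤ cB σA := by linarith
  exact (hBmono.le_iff_le).mp this
end

section
/- Let c_A, c_B : ℝ → ℝ be continuous strictly increasing bijections satisfying the cost condition, τ_B ≤ τ_A, σ_B = c_B⁻¹(c_B(τ_B)+1), σ_A = c_A⁻¹(c_A(τ_A)+1), and for each group m ∈ {A,B} define ℓ_m(σ) = c_m⁻¹(c_m(σ) − 1), the false-positive set FP_m(σ) = {x : ℓ_m(σ) ≤ x < τ_m}, and the false-negative set FN_m(σ) = {x : τ_m ≤ x < ℓ_m(σ)}. Then for every threshold σ ≤ σ_B: FN_A(σ) = FN_B(σ) = FN_A(σ_B) = FN_B(σ_B) = ∅, FP_A(σ_B) ⊆ FP_A(σ), and FP_B(σ_B) = ∅ ⊆ FP_B(σ); consequently, for any probability measures on features and any nonnegative error penalties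 C_FP, C_FN, the threshold σ_B incurs total expected penalty no larger than σ; hence every threshold σ < σ_B is dominated by σ_B. -/
open MeasureTheory

/-- Every threshold σ ≤ σ_B commits no false negatives on either group
(likewise σ_B itself), weakly more false positives on group A than σ_B, and weakly more
false positives on group B than σ_B (which commits none); hence for any probability
measures and nonnegative penalties, σ_B incurs total expected penalty no larger than σ,
so every threshold σ < σ_B is dominated by σ_B. -/
theorem low_thresholds_dominated (cA cB : ℝ → ℝ)
    (hAmono : StrictMono cA) (hBmono : StrictMono cB)
    (hAcont : Continuous cA) (hBcont : Continuous cB)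
    (hAbij : Function.Bijective cA) (hBbij : Function.Bijective cB)
    (hcost : ∀ x y : ℝ, x ≤ y → cA y - cA x ≤ cB y - cB x)
    (τA τB : ℝ) (hτ : τB ≤ τA)
    (σA σB : ℝ)
    (hσA : σA = Function.invFun cA (cA τA + 1))
    (hσB : σB = Function.invFun cB (cB τB + 1))
    (ℓA ℓB : ℝ → ℝ)
    (hℓA : ∀ σ, ℓA σ = Function.invFun cA (cA σ - 1))
    (hℓB : ∀ σ, ℓB σ = Function.invFun cB (cB σ - 1))
    (FPA FPB FNA FNB : ℝ → Set ℝ)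
    (hFPA : ∀ σ, FPA σ = {x | ℓA σ ≤ x ∧ x < τA})
    (hFPB : ∀ σ, FPB σ = {x | ℓB σ ≤ x ∧ x < τB})
    (hFNA : ∀ σ, FNA σ = {x | τA ≤ x ∧ x < ℓA σ})
    (hFNB : ∀ σ, FNB σ = {x | τB ≤ x ∧ x < ℓB σ})
    (σ : ℝ) (hσ : σ ≤ σB) :
    FNA σ = ∅ ∧ FNB σ = ∅ ∧ FNA σB = ∅ ∧ FNB σB = ∅ ∧
    FPA σB ⊆ FPA σ ∧ FPB σB = ∅ ∧ FPB σB ⊆ FPB σ ∧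
    (∀ (μA μB : Measure ℝ), IsProbabilityMeasure μA → IsProbabilityMeasure μB →
      ∀ pA pB CFP CFN : ℝ, 0 ≤ pA → 0 ≤ pB → 0 ≤ CFP → 0 ≤ CFN →
        CFP * (pA * (μA (FPA σB)).toReal + pB * (μB (FPB σB)).toReal) +
          CFN * (pA * (μA (FNA σB)).toReal + pB * (μB (FNB σB)).toReal) ≤
        CFP * (pA * (μA (FPA σ)).toReal + pB * (μB (FPB σ)).toReal) +
          CFN * (pA * (μA (FNA σ)).toReal + pB * (μB (FNB σ)).toReal)) := by
  have hAinv : Function.LeftInverse (Function.invFun cA) cA :=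
    Function.leftInverse_invFun hAbij.injective
  have hBinv : Function.LeftInverse (Function.invFun cB) cB :=
    Function.leftInverse_invFun hBbij.injective
  have hBeq : ∀ y, cB (Function.invFun cB y) = y := fun y =>
    Function.invFun_eq (hBbij.surjective y)
  have hAeq : ∀ y, cA (Function.invFun cA y) = y := fun y =>
    Function.invFun_eq (hAbij.surjective y)
  -- cB σB = cB τB + 1
  have hcBσB : cB σB = cB τB + 1 := by rw [hσB, hBeq]
  -- ℓB σB = τB
  have hℓBσB : ℓB σB = τB := by
    rw [hℓB, hcBσB]; simp [hBinv τB]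
  -- σB ≥ τB
  have hτBσB : τB ≤ σB := by
    by_contra h
    push_neg at h
    have := hBmono h
    linarith [hcBσB]
  -- ℓA σB ≤ τB
  have hℓAσB : ℓA σB ≤ τB := by
    have h1 : cA σB - cA τB ≤ cB σB - cB τB := hcost τB σB hτBσB
    have h2 : cA σB - 1 ≤ cA τB := by linarith [hcBσB]
    rw [hℓA]
    have := hAmono.le_iff_le (a := Function.invFun cA (cA σB - 1)) (b := τB)
    rw [← this]
    rw [hAeq]; exact h2
  -- monotonicity of ℓ
  have hℓAmono : ℓA σ ≤ ℓA σB := by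
    rw [hℓA, hℓA]
    have h1 : cA σ - 1 ≤ cA σB - 1 := by linarith [hAmono.le_iff_le.mpr hσ]
    have := hAmono.le_iff_le (a := Function.invFun cA (cA σ - 1))
      (b := Function.invFun cA (cA σB - 1))
    rw [← this, hAeq, hAeq]; exact h1
  have hℓBmono : ℓB σ ≤ ℓB σB := by
    rw [hℓB, hℓB]
    have h1 : cB σ - 1 ≤ cB σB - 1 := by linarith [hBmono.le_iff_le.mpr hσ]
    have := hBmono.le_iff_le (a := Function.invFun cB (cB σ - 1))
      (b := Function.invFun cB (cB σB - 1))
    rw [← this, hBeq, hBeq]; exact h1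
  have hℓAσ : ℓA σ ≤ τA := le_trans hℓAmono (le_trans hℓAσB hτ)
  have hℓBσ : ℓB σ ≤ τB := le_trans hℓBmono (le_of_eq hℓBσB)
  have eFNAσ : FNA σ = ∅ := by
    rw [hFNA]; ext x; simp only [Set.mem_setOf_eq, Set.mem_empty_iff_false, iff_false]
    rintro ⟨h1, h2⟩; linarith
  have eFNBσ : FNB σ = ∅ := by
    rw [hFNB]; ext x; simp only [Set.mem_setOf_eq, Set.mem_empty_iff_false, iff_false]
    rintro ⟨h1, h2⟩; linarith
  have eFNAσB : FNA σB = ∅ := by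
    rw [hFNA]; ext x; simp only [Set.mem_setOf_eq, Set.mem_empty_iff_false, iff_false]
    rintro ⟨h1, h2⟩; linarith [le_trans hℓAσB hτ]
  have eFNBσB : FNB σB = ∅ := by
    rw [hFNB]; ext x; simp only [Set.mem_setOf_eq, Set.mem_empty_iff_false, iff_false]
    rintro ⟨h1, h2⟩; linarith [hℓBσB.le]
  have sFPA : FPA σB ⊆ FPA σ := by
    rw [hFPA, hFPA]; rintro x ⟨h1, h2⟩; exact ⟨le_trans hℓAmono h1, h2⟩
  have eFPB : FPB σB = ∅ := by
    rw [hFPB]; ext x; simp only [Set.mem_setOf_eq, Set.mem_empty_iff_false, iff_false]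
    rintro ⟨h1, h2⟩; linarith [hℓBσB.le]
  refine ⟨eFNAσ, eFNBσ, eFNAσB, eFNBσB, sFPA, eFPB, by rw [eFPB]; exact Set.empty_subset _, ?_⟩
  intro μA μB hμA hμB pA pB CFP CFN hpA hpB hCFP hCFN
  rw [eFNAσ, eFNBσ, eFNAσB, eFNBσB, eFPB]
  simp only [measure_empty, ENNReal.toReal_zero, mul_zero, add_zero, zero_add]
  have hFPle : (μA (FPA σB)).toReal ≤ (μA (FPA σ)).toReal := by
    apply ENNReal.toReal_mono (measure_ne_top μA _) (measure_mono sFPA)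
  have h1 : pA * (μA (FPA σB)).toReal ≤ pA * (μA (FPA σ)).toReal :=
    mul_le_mul_of_nonneg_left hFPle hpA
  have h2 : 0 ≤ pB * (μB (FPB σ)).toReal :=
    mul_nonneg hpB ENNReal.toReal_nonneg
  nlinarith
end

section
/- Let c_A, c_B : ℝ → ℝ be continuous strictly increasing bijections satisfying the cost condition, τ_B ≤ τ_A, σ_B = c_B⁻¹(c_B(τ_B)+1), σ_A = c_A⁻¹(c_A(τ_A)+1), and for each group m ∈ {A,B} define ℓ_m(σ) = c_m⁻¹(c_m(σ) − 1), FP_m(σ) = {x : ℓ_m(σ) ≤ x < τ_m}, FN_m(σ) = {x : τ_m ≤ x < ℓ_m(σ)}. Then for every threshold σ ≥ σ_A: FP_A(σ) = FP_B(σ) = FP_A(σ_A) = FP_B(σ_A) = ∅, FN_B(σ_A) ⊆ FN_B(σ), and FN_A(σ_A) = ∅ ⊆ FN_A(σ); consequently, for any probability measures on features and any nonnegative error penalties, the threshold σ_A incurs total expected penalty no larger than σ; hence every threshold σ > σ_A is dominated by σ_A. -/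
open MeasureTheory

/-- Every threshold σ ≥ σ_A commits no false positives on either group
(likewise σ_A itself), weakly more false negatives on group B than σ_A, and weakly more
false negatives on group A than σ_A (which commits none); hence for any probability
measures and nonnegative penalties, σ_A incurs total expected penalty no larger than σ,
so every threshold σ > σ_A is dominated by σ_A. -/
theorem high_thresholds_dominated (cA cB : ℝ → ℝ)
    (hAmono : StrictMono cA) (hBmono : StrictMono cB)
    (hAcont : Continuous cA) (hBcont : Continuous cB)
    (hAbij : Function.Bijective cA) (hBbij : Function.Bijective cB)
    (hcost : ∀ x y : ℝ, x ≤ y → cA y - cA x ≤ cB y - cB x)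
    (τA τB : ℝ) (hτ : τB ≤ τA)
    (σA σB : ℝ)
    (hσA : σA = Function.invFun cA (cA τA + 1))
    (hσB : σB = Function.invFun cB (cB τB + 1))
    (ℓA ℓB : ℝ → ℝ)
    (hℓA : ∀ σ, ℓA σ = Function.invFun cA (cA σ - 1))
    (hℓB : ∀ σ, ℓB σ = Function.invFun cB (cB σ - 1))
    (FPA FPB FNA FNB : ℝ → Set ℝ)
    (hFPA : ∀ σ, FPA σ = {x | ℓA σ ≤ x ∧ x < τA})
    (hFPB : ∀ σ, FPB σ = {x | ℓB σ ≤ x ∧ x < τB})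
    (hFNA : ∀ σ, FNA σ = {x | τA ≤ x ∧ x < ℓA σ})
    (hFNB : ∀ σ, FNB σ = {x | τB ≤ x ∧ x < ℓB σ})
    (σ : ℝ) (hσ : σA ≤ σ) :
    FPA σ = ∅ ∧ FPB σ = ∅ ∧ FPA σA = ∅ ∧ FPB σA = ∅ ∧
    FNB σA ⊆ FNB σ ∧ FNA σA = ∅ ∧ FNA σA ⊆ FNA σ ∧
    (∀ (μA μB : Measure ℝ), IsProbabilityMeasure μA → IsProbabilityMeasure μB →
      ∀ pA pB CFP CFN : ℝ, 0 ≤ pA → 0 ≤ pB → 0 ≤ CFP → 0 ≤ CFN →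
        CFP * (pA * (μA (FPA σA)).toReal + pB * (μB (FPB σA)).toReal) +
          CFN * (pA * (μA (FNA σA)).toReal + pB * (μB (FNB σA)).toReal) ≤
        CFP * (pA * (μA (FPA σ)).toReal + pB * (μB (FPB σ)).toReal) +
          CFN * (pA * (μA (FNA σ)).toReal + pB * (μB (FNB σ)).toReal)) := by

  have hAr : ∀ b, cA (Function.invFun cA b) = b := fun b =>
    Function.rightInverse_invFun hAbij.2 b
  have hBr : ∀ b, cB (Function.invFun cB b) = b := fun b =>
    Function.rightInverse_invFun hBbij.2 b
  have hcAσA : cA σA = cA τA + 1 := by rw [hσA, hAr]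
  have hcℓA : ∀ s, cA (ℓA s) = cA s - 1 := fun s => by rw [hℓA, hAr]
  have hcℓB : ∀ s, cB (ℓB s) = cB s - 1 := fun s => by rw [hℓB, hBr]
  -- ℓA σA = τA
  have hℓAσA : ℓA σA = τA := hAmono.injective (by rw [hcℓA, hcAσA]; ring)
  -- ℓA σ ≥ τA
  have hℓAσ : τA ≤ ℓA σ := by
    have : cA τA ≤ cA (ℓA σ) := by
      rw [hcℓA]
      have := hAmono.monotone hσ
      linarith [hcAσA]
    exact hAmono.le_iff_le.mp this
  -- ℓB σ ≥ τB
  have hℓBσ : ∀ s, σA ≤ s → τB ≤ ℓB s := by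
    intro s hs
    have h1 : cA s - cA τA ≤ cB s - cB τA := hcost τA s (le_trans (by
      have : cA τA < cA σA := by rw [hcAσA]; linarith
      exact le_of_lt (hAmono.lt_iff_lt.mp this)) hs)
    have h2 : cB τB ≤ cB τA := hBmono.monotone hτ
    have h3 : cA σA ≤ cA s := hAmono.monotone hs
    have : cB τB ≤ cB (ℓB s) := by rw [hcℓB]; linarith [hcAσA]
    exact hBmono.le_iff_le.mp this
  -- ℓB monotone
  have hℓBmono : ℓB σA ≤ ℓB σ := by
    have : cB (ℓB σA) ≤ cB (ℓB σ) := by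
      rw [hcℓB, hcℓB]
      linarith [hBmono.monotone hσ]
    exact hBmono.le_iff_le.mp this
  have hFPAσ : FPA σ = ∅ := by
    rw [hFPA]; ext x; simp only [Set.mem_setOf_eq, Set.mem_empty_iff_false, iff_false]
    rintro ⟨h1, h2⟩; linarith
  have hFPBσ : FPB σ = ∅ := by
    rw [hFPB]; ext x; simp only [Set.mem_setOf_eq, Set.mem_empty_iff_false, iff_false]
    rintro ⟨h1, h2⟩; linarith [hℓBσ σ hσ]
  have hFPAσA : FPA σA = ∅ := by
    rw [hFPA]; ext x; simp only [Set.mem_setOf_eq, Set.mem_empty_iff_false, iff_false]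
    rintro ⟨h1, h2⟩; rw [hℓAσA] at h1; linarith
  have hFPBσA : FPB σA = ∅ := by
    rw [hFPB]; ext x; simp only [Set.mem_setOf_eq, Set.mem_empty_iff_false, iff_false]
    rintro ⟨h1, h2⟩; linarith [hℓBσ σA le_rfl]
  have hFNBsub : FNB σA ⊆ FNB σ := by
    rw [hFNB, hFNB]; rintro x ⟨h1, h2⟩; exact ⟨h1, lt_of_lt_of_le h2 hℓBmono⟩
  have hFNAσA : FNA σA = ∅ := by
    rw [hFNA]; ext x; simp only [Set.mem_setOf_eq, Set.mem_empty_iff_false, iff_false]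
    rintro ⟨h1, h2⟩; rw [hℓAσA] at h2; linarith
  refine ⟨hFPAσ, hFPBσ, hFPAσA, hFPBσA, hFNBsub, hFNAσA, by rw [hFNAσA]; exact Set.empty_subset _, ?_⟩
  intro μA μB hμA hμB pA pB CFP CFN hpA hpB hCFP hCFN
  have e1 : μA (FPA σA) = 0 := by rw [hFPAσA]; simp
  have e2 : μB (FPB σA) = 0 := by rw [hFPBσA]; simp
  have e3 : μA (FNA σA) = 0 := by rw [hFNAσA]; simp
  rw [e1, e2, e3]
  simp only [ENNReal.toReal_zero, mul_zero, add_zero, zero_add]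
  have hBle : (μB (FNB σA)).toReal ≤ (μB (FNB σ)).toReal := by
    apply ENNReal.toReal_mono (measure_ne_top _ _)
    exact measure_mono hFNBsub
  have hnn : ∀ (μ : Measure ℝ) (s : Set ℝ), 0 ≤ (μ s).toReal := fun _ _ => ENNReal.toReal_nonneg
  nlinarith [hnn μA (FPA σ), hnn μB (FPB σ), hnn μA (FNA σ), hnn μB (FNB σ),
    hnn μB (FNB σA), mul_nonneg hpA (hnn μA (FPA σ)), mul_nonneg hpB (hnn μB (FPB σ)),
    mul_nonneg hpA (hnn μA (FNA σ)),
    mul_nonneg hCFP (add_nonneg (mul_nonneg hpA (hnn μA (FPA σ))) (mul_nonneg hpB (hnn μB (FPB σ)))),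
    mul_nonneg hCFN (mul_nonneg hpA (hnn μA (FNA σ))),
    mul_le_mul_of_nonneg_left (mul_le_mul_of_nonneg_left hBle hpB) hCFN]
end

section
/- Let c_A, c_B : ℝ → ℝ be continuous strictly increasing bijections satisfying the cost condition, τ_B ≤ τ_A, σ_B = c_B⁻¹(c_B(τ_B)+1), σ_A = c_A⁻¹(c_A(τ_A)+1), and ℓ_m(σ) = c_m⁻¹(c_m(σ) − 1). Then for any threshold σ ∈ [σ_B, σ_A]: the false-negative set on group A and the false-positive set on group B are empty, the false-negative set on group B equals {x : τ_B ≤ x < ℓ_B(σ)}, and the false-positive set on group A equals {x : ℓ_A(σ) ≤ x < τ_A}; consequently, for probability measures 𝒟_A, 𝒟_B, population proportions p_A, p_B, and penalties C_FN, C_FP ≥ 0, the learner's total expected penalty equals C_FN · p_B · P_{x∼𝒟_B}[τ_B ≤ x < ℓ_B(σ)] + C_FP · p_A · P_{x∼𝒟_A}[ℓ_A(σ) ≤ x < τ_A]. -/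
open MeasureTheory

/-- For any threshold σ ∈ [σ_B, σ_A], the learner commits no false
negatives on group A and no false positives on group B; her false negatives on group B
are exactly {x : τ_B ≤ x < ℓ_B(σ)} and her false positives on group A exactly
{x : ℓ_A(σ) ≤ x < τ_A}, so her total expected penalty equals
C_FN·p_B·P_{𝒟_B}[τ_B ≤ x < ℓ_B(σ)] + C_FP·p_A·P_{𝒟_A}[ℓ_A(σ) ≤ x < τ_A]. -/
theorem learner_cost_one_dim (cA cB : ℝ → ℝ)
    (hAmono : StrictMono cA) (hBmono : StrictMono cB)
    (hAcont : Continuous cA) (hBcont : Continuous cB)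
    (hAbij : Function.Bijective cA) (hBbij : Function.Bijective cB)
    (hcost : ∀ x y : ℝ, x ≤ y → cA y - cA x ≤ cB y - cB x)
    (τA τB : ℝ) (hτ : τB ≤ τA)
    (σA σB : ℝ)
    (hσA : σA = Function.invFun cA (cA τA + 1))
    (hσB : σB = Function.invFun cB (cB τB + 1))
    (ℓA ℓB : ℝ → ℝ)
    (hℓA : ∀ σ, ℓA σ = Function.invFun cA (cA σ - 1))
    (hℓB : ∀ σ, ℓB σ = Function.invFun cB (cB σ - 1))
    -- false positive sets: classified positively (x ≥ ℓ_m σ) with true label 0 (x < τ_m)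
    (FPA FPB FNA FNB : ℝ → Set ℝ)
    (hFPA : ∀ σ, FPA σ = {x | ℓA σ ≤ x ∧ ¬ (τA ≤ x)})
    (hFPB : ∀ σ, FPB σ = {x | ℓB σ ≤ x ∧ ¬ (τB ≤ x)})
    -- false negative sets: classified negatively (x < ℓ_m σ) with true label 1 (x ≥ τ_m)
    (hFNA : ∀ σ, FNA σ = {x | ¬ (ℓA σ ≤ x) ∧ τA ≤ x})
    (hFNB : ∀ σ, FNB σ = {x | ¬ (ℓB σ ≤ x) ∧ τB ≤ x})
    (σ : ℝ) (hσ : σ ∈ Set.Icc σB σA)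
    (𝒟A 𝒟B : Measure ℝ)
    (h𝒟A : IsProbabilityMeasure 𝒟A) (h𝒟B : IsProbabilityMeasure 𝒟B)
    (pA pB CFP CFN : ℝ) (hpA : 0 ≤ pA) (hpB : 0 ≤ pB)
    (hCFP : 0 ≤ CFP) (hCFN : 0 ≤ CFN) :
    FNA σ = ∅ ∧ FPB σ = ∅ ∧
    FNB σ = {x | τB ≤ x ∧ x < ℓB σ} ∧
    FPA σ = {x | ℓA σ ≤ x ∧ x < τA} ∧
    CFP * (pA * (𝒟A (FPA σ)).toReal + pB * (𝒟B (FPB σ)).toReal) +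
      CFN * (pA * (𝒟A (FNA σ)).toReal + pB * (𝒟B (FNB σ)).toReal) =
    CFN * pB * (𝒟B {x | τB ≤ x ∧ x < ℓB σ}).toReal +
      CFP * pA * (𝒟A {x | ℓA σ ≤ x ∧ x < τA}).toReal := by
  have hArinv : ∀ y, cA (Function.invFun cA y) = y :=
    fun y => Function.rightInverse_invFun hAbij.2 y
  have hBrinv : ∀ y, cB (Function.invFun cB y) = y :=
    fun y => Function.rightInverse_invFun hBbij.2 y
  have hℓAle : ℓA σ ≤ τA := by
    have h1 : cA (ℓA σ) = cA σ - 1 := by rw [hℓA]; exact hArinv _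
    have h2 : cA σA = cA τA + 1 := by rw [hσA]; exact hArinv _
    have h3 : cA σ ≤ cA σA := hAmono.monotone hσ.2
    have : cA (ℓA σ) ≤ cA τA := by rw [h1]; linarith
    exact hAmono.le_iff_le.mp this
  have hℓBge : τB ≤ ℓB σ := by
    have h1 : cB (ℓB σ) = cB σ - 1 := by rw [hℓB]; exact hBrinv _
    have h2 : cB σB = cB τB + 1 := by rw [hσB]; exact hBrinv _
    have h3 : cB σB ≤ cB σ := hBmono.monotone hσ.1
    have : cB τB ≤ cB (ℓB σ) := by rw [h1]; linarith
    exact hBmono.le_iff_le.mp this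
  have eFNA : FNA σ = ∅ := by
    rw [hFNA]; ext x
    simp only [Set.mem_setOf_eq, Set.mem_empty_iff_false, iff_false, not_and, not_le, not_lt]
    intro h; linarith
  have eFPB : FPB σ = ∅ := by
    rw [hFPB]; ext x
    simp only [Set.mem_setOf_eq, Set.mem_empty_iff_false, iff_false, not_and, not_not]
    intro h; linarith
  have eFNB : FNB σ = {x | τB ≤ x ∧ x < ℓB σ} := by
    rw [hFNB]; ext x; simp only [Set.mem_setOf_eq, not_le]; tauto
  have eFPA : FPA σ = {x | ℓA σ ≤ x ∧ x < τA} := by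
    rw [hFPA]; ext x; simp only [Set.mem_setOf_eq, not_le]
  refine ⟨eFNA, eFPB, eFNB, eFPA, ?_⟩
  rw [eFNA, eFPB, eFNB, eFPA]
  simp only [measure_empty, ENNReal.toReal_zero]
  ring
end

section
/- Let c_A, c_B : ℝ → ℝ be continuous strictly increasing bijections satisfying the cost condition, τ_B ≤ τ_A, and ℓ_m(σ) = c_m⁻¹(c_m(σ) − 1). The threshold classifier with threshold σ_A = c_A⁻¹(c_A(τ_A)+1) classifies every group-A candidate correctly (a group-A candidate is classified positively iff her unmanipulated feature x satisfies x ≥ τ_A), and its total expected penalty equals C_FN · p_B · P_{x∼𝒟_B}[τ_B ≤ x < ℓ_B(σ_A)]. -/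
open MeasureTheory

/-- Corollary: classifier σ_A: the threshold σ_A = c_A⁻¹(c_A(τ_A)+1)
classifies every group-A candidate correctly (accepted iff x ≥ τ_A), and its total
expected penalty equals C_FN·p_B·P_{𝒟_B}[τ_B ≤ x < ℓ_B(σ_A)]. -/
theorem sigmaA_perfect_on_A (cA cB : ℝ → ℝ)
    (hAmono : StrictMono cA) (hBmono : StrictMono cB)
    (hAcont : Continuous cA) (hBcont : Continuous cB)
    (hAbij : Function.Bijective cA) (hBbij : Function.Bijective cB)
    (hcost : ∀ x y : ℝ, x ≤ y → cA y - cA x ≤ cB y - cB x)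
    (τA τB : ℝ) (hτ : τB ≤ τA)
    (σA : ℝ) (hσA : σA = Function.invFun cA (cA τA + 1))
    (ℓA ℓB : ℝ → ℝ)
    (hℓA : ∀ σ, ℓA σ = Function.invFun cA (cA σ - 1))
    (hℓB : ∀ σ, ℓB σ = Function.invFun cB (cB σ - 1))
    (𝒟A 𝒟B : Measure ℝ)
    (h𝒟A : IsProbabilityMeasure 𝒟A) (h𝒟B : IsProbabilityMeasure 𝒟B)
    (pA pB CFP CFN : ℝ) (hpA : 0 ≤ pA) (hpB : 0 ≤ pB)
    (hCFP : 0 ≤ CFP) (hCFN : 0 ≤ CFN) :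
    -- a best-responding group-A candidate is accepted (x ≥ ℓ_A(σ_A)) iff her label is 1
    (∀ x : ℝ, ℓA σA ≤ x ↔ τA ≤ x) ∧
    CFP * (pA * (𝒟A {x | ℓA σA ≤ x ∧ ¬ (τA ≤ x)}).toReal +
           pB * (𝒟B {x | ℓB σA ≤ x ∧ ¬ (τB ≤ x)}).toReal) +
      CFN * (pA * (𝒟A {x | ¬ (ℓA σA ≤ x) ∧ τA ≤ x}).toReal +
             pB * (𝒟B {x | ¬ (ℓB σA ≤ x) ∧ τB ≤ x}).toReal) =
    CFN * pB * (𝒟B {x | τB ≤ x ∧ x < ℓB σA}).toReal := by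
  have hAeq : cA σA = cA τA + 1 := by
    rw [hσA]; exact Function.rightInverse_invFun hAbij.2 _
  have hℓAeq : cA (ℓA σA) = cA σA - 1 := by
    rw [hℓA]; exact Function.rightInverse_invFun hAbij.2 _
  have hℓBeq : cB (ℓB σA) = cB σA - 1 := by
    rw [hℓB]; exact Function.rightInverse_invFun hBbij.2 _
  have hℓAτ : ℓA σA = τA := hAbij.1 (by rw [hℓAeq, hAeq]; ring)
  have hℓBle : ℓB σA ≤ σA := by
    have h : cB (ℓB σA) ≤ cB σA := by linarith
    exact hBmono.le_iff_le.mp h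
  have hτℓB : τA ≤ ℓB σA := by
    have h := hcost (ℓB σA) σA hℓBle
    have : cA τA ≤ cA (ℓB σA) := by linarith
    exact (hAmono.le_iff_le).mp this
  refine ⟨fun x => by rw [hℓAτ], ?_⟩
  have e1 : {x : ℝ | ℓA σA ≤ x ∧ ¬ (τA ≤ x)} = ∅ := by
    ext x; simp only [Set.mem_setOf_eq, Set.mem_empty_iff_false, iff_false]
    rintro ⟨h1, h2⟩; exact h2 (hℓAτ ▸ h1)
  have e2 : {x : ℝ | ℓB σA ≤ x ∧ ¬ (τB ≤ x)} = ∅ := by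
    ext x; simp only [Set.mem_setOf_eq, Set.mem_empty_iff_false, iff_false]
    rintro ⟨h1, h2⟩; exact h2 (le_trans (le_trans hτ hτℓB) h1)
  have e3 : {x : ℝ | ¬ (ℓA σA ≤ x) ∧ τA ≤ x} = ∅ := by
    ext x; simp only [Set.mem_setOf_eq, Set.mem_empty_iff_false, iff_false]
    rintro ⟨h1, h2⟩; exact h1 (hℓAτ ▸ h2)
  have e4 : {x : ℝ | ¬ (ℓB σA ≤ x) ∧ τB ≤ x} = {x : ℝ | τB ≤ x ∧ x < ℓB σA} := by
    ext x; simp only [Set.mem_setOf_eq, not_le]; tauto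
  rw [e1, e2, e3, e4]
  simp [measure_empty]
  ring
end

section
/- Let c_A, c_B : ℝ → ℝ be continuous strictly increasing bijections satisfying the cost condition, τ_B ≤ τ_A, and ℓ_m(σ) = c_m⁻¹(c_m(σ) − 1). The threshold classifier with threshold σ_B = c_B⁻¹(c_B(τ_B)+1) classifies every group-B candidate correctly (a group-B candidate is classified positively iff her unmanipulated feature x satisfies x ≥ τ_B), and its total expected penalty equals C_FP · p_A · P_{x∼𝒟_A}[ℓ_A(σ_B) ≤ x < τ_A]. -/
open MeasureTheory

/-- Corollary: classifier σ_B: the threshold σ_B = c_B⁻¹(c_B(τ_B)+1)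
classifies every group-B candidate correctly (accepted iff x ≥ τ_B), and its total
expected penalty equals C_FP·p_A·P_{𝒟_A}[ℓ_A(σ_B) ≤ x < τ_A]. -/
theorem sigmaB_perfect_on_B (cA cB : ℝ → ℝ)
    (hAmono : StrictMono cA) (hBmono : StrictMono cB)
    (hAcont : Continuous cA) (hBcont : Continuous cB)
    (hAbij : Function.Bijective cA) (hBbij : Function.Bijective cB)
    (hcost : ∀ x y : ℝ, x ≤ y → cA y - cA x ≤ cB y - cB x)
    (τA τB : ℝ) (hτ : τB ≤ τA)
    (σB : ℝ) (hσB : σB = Function.invFun cB (cB τB + 1))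
    (ℓA ℓB : ℝ → ℝ)
    (hℓA : ∀ σ, ℓA σ = Function.invFun cA (cA σ - 1))
    (hℓB : ∀ σ, ℓB σ = Function.invFun cB (cB σ - 1))
    (𝒟A 𝒟B : Measure ℝ)
    (h𝒟A : IsProbabilityMeasure 𝒟A) (h𝒟B : IsProbabilityMeasure 𝒟B)
    (pA pB CFP CFN : ℝ) (hpA : 0 ≤ pA) (hpB : 0 ≤ pB)
    (hCFP : 0 ≤ CFP) (hCFN : 0 ≤ CFN) :
    -- a best-responding group-B candidate is accepted (x ≥ ℓ_B(σ_B)) iff her label is 1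
    (∀ x : ℝ, ℓB σB ≤ x ↔ τB ≤ x) ∧
    CFP * (pA * (𝒟A {x | ℓA σB ≤ x ∧ ¬ (τA ≤ x)}).toReal +
           pB * (𝒟B {x | ℓB σB ≤ x ∧ ¬ (τB ≤ x)}).toReal) +
      CFN * (pA * (𝒟A {x | ¬ (ℓA σB ≤ x) ∧ τA ≤ x}).toReal +
             pB * (𝒟B {x | ¬ (ℓB σB ≤ x) ∧ τB ≤ x}).toReal) =
    CFP * pA * (𝒟A {x | ℓA σB ≤ x ∧ x < τA}).toReal := by
  have hBinv : Function.RightInverse (Function.invFun cB) cB :=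
    Function.rightInverse_invFun hBbij.2
  have hAinv : Function.RightInverse (Function.invFun cA) cA :=
    Function.rightInverse_invFun hAbij.2
  have hcBσ : cB σB = cB τB + 1 := by rw [hσB]; exact hBinv _
  have hℓBeq : ℓB σB = τB := by
    have : cB (ℓB σB) = cB τB := by
      rw [hℓB, hBinv, hcBσ]; ring
    exact hBmono.injective this
  have hσBge : τB ≤ σB := by
    by_contra h
    push_neg at h
    have := hBmono h
    linarith [hcBσ]
  have hℓAle : ℓA σB ≤ τA := by
    have hc : cA σB - cA τB ≤ cB σB - cB τB := hcost _ _ hσBge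
    have : cA (ℓA σB) ≤ cA τA := by
      rw [hℓA, hAinv]
      have : cB σB - cB τB = 1 := by rw [hcBσ]; ring
      have h2 : cA σB - 1 ≤ cA τB := by linarith
      exact le_trans h2 ((hAmono.le_iff_le).mpr hτ)
    exact (hAmono.le_iff_le).mp this
  constructor
  · intro x; rw [hℓBeq]
  · have eB1 : {x : ℝ | ℓB σB ≤ x ∧ ¬ (τB ≤ x)} = ∅ := by
      ext x; simp [hℓBeq]
    have eB2 : {x : ℝ | ¬ (ℓB σB ≤ x) ∧ τB ≤ x} = ∅ := by
      ext x; simp [hℓBeq]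
    have eA2 : {x : ℝ | ¬ (ℓA σB ≤ x) ∧ τA ≤ x} = ∅ := by
      ext x; simp; intro h; linarith
    have eA1 : {x : ℝ | ℓA σB ≤ x ∧ ¬ (τA ≤ x)} = {x : ℝ | ℓA σB ≤ x ∧ x < τA} := by
      ext x; simp [not_le]
    rw [eB1, eB2, eA2, eA1]
    simp
    ring
end

section
/- Let c : ℝ → ℝ be a differentiable, strictly increasing bijection with c' > 0 everywhere whose derivative c' is strictly decreasing (c strictly concave), and let q ∈ (0,1). Define ℓ_B(σ) = c⁻¹(c(σ) − 1) and ℓ_A(σ) = c⁻¹(c(σ) − 1/q) (these are the minimum unmanipulated features reaching σ at cost 1 under costs c_B = c and c_A = q·c respectively). Then the function σ ↦ ℓ_B(σ) − ℓ_A(σ) is strictly increasing on ℝ; consequently, when unmanipulated features are uniformly distributed for both groups, the error-minimizing threshold in [σ_B, σ_A] is σ* = σ_B. -/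
/-!
Strict concavity of `c` makes the increment `c (x + d) - c x` strictly decreasing in `x`.
Both `ℓA σ < ℓB σ` increase with `σ`, while the cost rise `c (ℓB σ) - c (ℓA σ) = 1/q - 1` stays
fixed; so as `σ` moves right, covering that fixed rise needs a strictly longer interval.
-/

open Function

section IncreasingGaps

variable {c : ℝ → ℝ}

theorem strictAnti_increment_of_strictAnti_deriv {c' : ℝ → ℝ}
    (hderiv : ∀ x, HasDerivAt c (c' x) x) (hconcave : StrictAnti c') {d : ℝ} (hd : 0 < d) :
    StrictAnti fun x => c (x + d) - c x := by
  refine strictAnti_of_deriv_neg fun x => ?_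
  have hincrement : HasDerivAt (fun x => c (x + d) - c x) (c' (x + d) - c' x) x :=
    ((hderiv (x + d)).comp_add_const x d).sub (hderiv x)
  rw [hincrement.deriv]
  exact sub_neg.mpr (hconcave (lt_add_of_pos_right x hd))

theorem sub_lt_sub_of_strictAnti_increment (hmono : StrictMono c)
    (hinc : ∀ d, 0 < d → StrictAnti fun x => c (x + d) - c x)
    {a b a' b' : ℝ} (haa' : a < a') (hab : a < b) (hrise : c b - c a = c b' - c a') :
    b - a < b' - a' := by
  have hshift : c (a' + (b - a)) - c a' < c (a + (b - a)) - c a :=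
    hinc (b - a) (sub_pos.mpr hab) haa'
  rw [add_sub_cancel, hrise] at hshift
  linarith [hmono.lt_iff_lt.mp (sub_lt_sub_iff_right (c a') |>.mp hshift)]

theorem strictMono_invFun_comp_sub (hmono : StrictMono c) (hsurj : Surjective c) (t : ℝ) :
    StrictMono fun σ => invFun c (c σ - t) := fun σ τ hστ => by
  rw [← hmono.lt_iff_lt, rightInverse_invFun hsurj, rightInverse_invFun hsurj]
  linarith [hmono hστ]

theorem invFun_comp_sub_lt (hmono : StrictMono c) (hsurj : Surjective c) (σ : ℝ) {s t : ℝ}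
    (hst : s < t) : invFun c (c σ - t) < invFun c (c σ - s) := by
  rw [← hmono.lt_iff_lt, rightInverse_invFun hsurj, rightInverse_invFun hsurj]
  linarith

theorem strictMono_invFun_comp_sub_sub {c' : ℝ → ℝ} (hderiv : ∀ x, HasDerivAt c (c' x) x)
    (hconcave : StrictAnti c') (hmono : StrictMono c) (hsurj : Surjective c) {s t : ℝ}
    (hst : s < t) :
    StrictMono fun σ => invFun c (c σ - s) - invFun c (c σ - t) := fun σ τ hστ => by
  refine sub_lt_sub_of_strictAnti_increment hmono
    (fun d hd => strictAnti_increment_of_strictAnti_deriv hderiv hconcave hd)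
    (strictMono_invFun_comp_sub hmono hsurj t hστ) (invFun_comp_sub_lt hmono hsurj σ hst) ?_
  simp only [rightInverse_invFun hsurj _]
  ring

end IncreasingGaps

theorem concave_costs_optimal_sigmaB_general (c c' : ℝ → ℝ)
    (hderiv : ∀ x, HasDerivAt c (c' x) x)
    (hmono : StrictMono c) (hbij : Function.Bijective c)
    (hconcave : StrictAnti c')
    (q : ℝ) (hq : q ∈ Set.Ioo (0 : ℝ) 1)
    (ℓB ℓA : ℝ → ℝ)
    (hℓB : ∀ σ, ℓB σ = Function.invFun c (c σ - 1))
    (hℓA : ∀ σ, ℓA σ = Function.invFun c (c σ - 1 / q)) :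
    StrictMono (fun σ => ℓB σ - ℓA σ) ∧
    ∀ σB σA : ℝ, σB ≤ σA → ∀ σ ∈ Set.Icc σB σA,
      ℓB σB - ℓA σB ≤ ℓB σ - ℓA σ := by
  have hcost : (1 : ℝ) < 1 / q := by
    rw [lt_div_iff₀ hq.1, one_mul]
    exact hq.2
  have hgap : StrictMono fun σ => ℓB σ - ℓA σ := by
    simpa only [hℓB, hℓA] using
      strictMono_invFun_comp_sub_sub hderiv hconcave hmono hbij.surjective hcost
  exact ⟨hgap, fun _ _ _ _ hσ => hgap.monotone hσ.1⟩

/-- With strictly concave costs (c' strictly decreasing) and proportional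
group costs c_A = q·c (q ∈ (0,1)), the error interval length ℓ_B(σ) − ℓ_A(σ) is strictly
increasing in σ; consequently under uniform feature distributions the error-minimizing
threshold in [σ_B, σ_A] is σ_B. -/
theorem concave_costs_optimal_sigmaB (c c' : ℝ → ℝ)
    (hderiv : ∀ x, HasDerivAt c (c' x) x)
    (hpos : ∀ x, 0 < c' x)
    (hmono : StrictMono c) (hbij : Function.Bijective c)
    (hconcave : StrictAnti c')
    (q : ℝ) (hq : q ∈ Set.Ioo (0 : ℝ) 1)
    (ℓB ℓA : ℝ → ℝ)
    (hℓB : ∀ σ, ℓB σ = Function.invFun c (c σ - 1))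
    (hℓA : ∀ σ, ℓA σ = Function.invFun c (c σ - 1 / q)) :
    StrictMono (fun σ => ℓB σ - ℓA σ) ∧
    ∀ σB σA : ℝ, σB ≤ σA → ∀ σ ∈ Set.Icc σB σA,
      ℓB σB - ℓA σB ≤ ℓB σ - ℓA σ :=
  concave_costs_optimal_sigmaB_general c c' hderiv hmono hbij hconcave q hq ℓB ℓA hℓB hℓA
end

section
/- Let c : ℝ → ℝ be a differentiable, strictly increasing bijection with c' > 0 everywhere whose derivative c' is strictly increasing (c strictly convex), and let q ∈ (0,1). Define ℓ_B(σ) = c⁻¹(c(σ) − 1) and ℓ_A(σ) = c⁻¹(c(σ) − 1/q). Then the function σ ↦ ℓ_B(σ) − ℓ_A(σ) is strictly decreasing on ℝ; consequently, when unmanipulated features are uniformly distributed for both groups, the error-minimizing threshold in [σ_B, σ_A] is σ* = σ_A. -/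
/-! Writing `g = c⁻¹`, the inverse function theorem gives
`(g (c σ - a))' = c' σ / c' (g (c σ - a))`. For `a < b` we have `g (c σ - b) < g (c σ - a)`,
so strict convexity makes the denominator for `a` the larger one, and the derivative of
`g (c σ - a) - g (c σ - b)` is negative. -/

open Function

theorem StrictMono.invFun_eq_orderIsoOfSurjective_symm {α β : Type*} [LinearOrder α]
    [Nonempty α] [Preorder β] {f : α → β} (hf : StrictMono f) (hsurj : Surjective f) :
    invFun f = (hf.orderIsoOfSurjective f hsurj).symm :=
  invFun_eq_of_injective_of_rightInverse hf.injective
    (StrictMono.orderIsoOfSurjective_self_symm_apply f hf hsurj)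

section InverseCost

variable {c c' : ℝ → ℝ}

theorem hasDerivAt_invFun_of_strictMono (hderiv : ∀ x, HasDerivAt c (c' x) x)
    (hpos : ∀ x, 0 < c' x) (hmono : StrictMono c) (hsurj : Surjective c) (y : ℝ) :
    HasDerivAt (invFun c) (c' (invFun c y))⁻¹ y := by
  have hcont : Continuous (invFun c) := by
    rw [hmono.invFun_eq_orderIsoOfSurjective_symm hsurj]
    exact OrderIso.continuous _
  exact (hderiv _).of_local_left_inverse hcont.continuousAt (hpos _).ne'
    (.of_forall (rightInverse_invFun hsurj))

theorem hasDerivAt_invFun_comp_sub (hderiv : ∀ x, HasDerivAt c (c' x) x)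
    (hpos : ∀ x, 0 < c' x) (hmono : StrictMono c) (hsurj : Surjective c) (a σ : ℝ) :
    HasDerivAt (fun σ => invFun c (c σ - a)) (c' σ / c' (invFun c (c σ - a))) σ := by
  rw [div_eq_inv_mul]
  exact (hasDerivAt_invFun_of_strictMono hderiv hpos hmono hsurj _).comp σ ((hderiv σ).sub_const a)

theorem strictAnti_invFun_comp_sub_sub (hderiv : ∀ x, HasDerivAt c (c' x) x)
    (hpos : ∀ x, 0 < c' x) (hmono : StrictMono c) (hsurj : Surjective c)
    (hconvex : StrictMono c') {a b : ℝ} (hab : a < b) :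
    StrictAnti fun σ => invFun c (c σ - a) - invFun c (c σ - b) := by
  refine strictAnti_of_hasDerivAt_neg (fun σ => (hasDerivAt_invFun_comp_sub hderiv hpos hmono
    hsurj a σ).sub (hasDerivAt_invFun_comp_sub hderiv hpos hmono hsurj b σ)) fun σ => ?_
  have hinv : invFun c (c σ - b) < invFun c (c σ - a) := by
    rw [hmono.invFun_eq_orderIsoOfSurjective_symm hsurj]
    exact OrderIso.strictMono _ (by linarith)
  have hslope : c' σ / c' (invFun c (c σ - a)) < c' σ / c' (invFun c (c σ - b)) :=
    div_lt_div_of_pos_left (hpos σ) (hpos _) (hconvex hinv)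
  linarith

end InverseCost

/-- With strictly convex costs (c' strictly increasing) and proportional
group costs c_A = q·c (q ∈ (0,1)), the error interval length ℓ_B(σ) − ℓ_A(σ) is strictly
decreasing in σ; consequently under uniform feature distributions the error-minimizing
threshold in [σ_B, σ_A] is σ_A. -/
theorem convex_costs_optimal_sigmaA (c c' : ℝ → ℝ)
    (hderiv : ∀ x, HasDerivAt c (c' x) x)
    (hpos : ∀ x, 0 < c' x)
    (hmono : StrictMono c) (hbij : Function.Bijective c)
    (hconvex : StrictMono c')
    (q : ℝ) (hq : q ∈ Set.Ioo (0 : ℝ) 1)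
    (ℓB ℓA : ℝ → ℝ)
    (hℓB : ∀ σ, ℓB σ = Function.invFun c (c σ - 1))
    (hℓA : ∀ σ, ℓA σ = Function.invFun c (c σ - 1 / q)) :
    StrictAnti (fun σ => ℓB σ - ℓA σ) ∧
    ∀ σB σA : ℝ, σB ≤ σA → ∀ σ ∈ Set.Icc σB σA,
      ℓB σA - ℓA σA ≤ ℓB σ - ℓA σ := by
  have hq1 : (1 : ℝ) < 1 / q := by rw [lt_div_iff₀ hq.1]; linarith [hq.2]
  have hanti : StrictAnti fun σ => ℓB σ - ℓA σ := by
    simpa only [hℓB, hℓA] using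
      strictAnti_invFun_comp_sub_sub hderiv hpos hmono hbij.2 hconvex hq1
  exact ⟨hanti, fun _ _ _ σ hσ => hanti.antitone hσ.2⟩
end

section
/- Let c(x) = b·x + c₀ with b > 0, and let q ∈ (0,1). Define ℓ_B(σ) = c⁻¹(c(σ) − 1) and ℓ_A(σ) = c⁻¹(c(σ) − 1/q). Then for every σ ∈ ℝ, ℓ_B(σ) − ℓ_A(σ) = (1 − q)/(q·b), a constant independent of σ; consequently, when unmanipulated features are uniformly distributed for both groups, the learner's error is the same for every threshold σ ∈ [σ_B, σ_A], so the learner is indifferent among all such thresholds. -/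
/-- With affine cost c(x) = b·x + c₀ (b > 0) and proportional group costs
c_A = q·c (q ∈ (0,1)), the error interval length ℓ_B(σ) − ℓ_A(σ) equals the constant
(1 − q)/(q·b) for every σ; hence the learner's error is the same for every threshold and
she is indifferent among all thresholds. -/
theorem affine_costs_indifferent (b c₀ q : ℝ) (hb : 0 < b)
    (hq : q ∈ Set.Ioo (0 : ℝ) 1)
    (c : ℝ → ℝ) (hc : ∀ x, c x = b * x + c₀)
    (ℓB ℓA : ℝ → ℝ)
    (hℓB : ∀ σ, ℓB σ = Function.invFun c (c σ - 1))
    (hℓA : ∀ σ, ℓA σ = Function.invFun c (c σ - 1 / q)) :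
    (∀ σ : ℝ, ℓB σ - ℓA σ = (1 - q) / (q * b)) ∧
    (∀ σ σ' : ℝ, ℓB σ - ℓA σ = ℓB σ' - ℓA σ') := by
  obtain ⟨hq0, hq1⟩ := hq
  have hinj : Function.Injective c := by
    intro x y hxy
    rw [hc, hc] at hxy
    have : b * x = b * y := by linarith
    exact mul_left_cancel₀ (ne_of_gt hb) this
  have key : ∀ σ t : ℝ, Function.invFun c (c σ - t) = σ - t / b := by
    intro σ t
    have h1 : c σ - t = c (σ - t / b) := by
      rw [hc, hc]; field_simp; ring
    rw [h1, Function.leftInverse_invFun hinj]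
  have main : ∀ σ : ℝ, ℓB σ - ℓA σ = (1 - q) / (q * b) := by
    intro σ
    rw [hℓB, hℓA, key, key]
    field_simp
    ring
  exact ⟨main, fun σ σ' => by rw [main, main]⟩
end

section
/- Let d ≥ 1, let c ∈ ℝ^d have all coordinates c_i > 0, let g ∈ ℝ^d be nonzero with all coordinates g_i ≥ 0, let g₀ ∈ ℝ, and set M = max_{i∈[d]} g_i/c_i. Then for any x ∈ ℝ^d, there exists y ∈ ℝ^d with y ≥ x componentwise, g·y ≥ g₀, and manipulation cost Σᵢ c_i(y_i − x_i) ≤ 1, if and only if g·x ≥ g₀ − M. Hence a rational candidate with linear cost c facing linear classifier (g, g₀) is classified positively at best response exactly when her unmanipulated feature satisfies g·x ≥ g₀ − max_i g_i/c_i. -/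
/-- A rational candidate with linear cost c facing linear classifier
(g, g₀) can obtain a positive classification at cost at most 1 (moving componentwise
upward) if and only if g·x ≥ g₀ − max_i g_i/c_i. -/
theorem accepted_iff_above_effective_threshold (d : ℕ) (hd : 1 ≤ d)
    (c g : Fin d → ℝ)
    (hc : ∀ i, 0 < c i) (hg : ∀ i, 0 ≤ g i) (hgne : g ≠ 0)
    (g₀ : ℝ) (k : Fin d) (hk : ∀ i, g i / c i ≤ g k / c k)
    (x : Fin d → ℝ) :
    (∃ y : Fin d → ℝ, (∀ i, x i ≤ y i) ∧ g₀ ≤ ∑ i, g i * y i ∧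
        ∑ i, c i * (y i - x i) ≤ 1) ↔
      g₀ - g k / c k ≤ ∑ i, g i * x i := by
  have hM : 0 ≤ g k / c k := le_trans (div_nonneg (hg k) (hc k).le) (hk k)
  constructor
  · rintro ⟨y, hxy, hgy, hcost⟩
    have key : ∑ i, g i * y i - ∑ i, g i * x i ≤ g k / c k := by
      rw [← Finset.sum_sub_distrib]
      have h1 : ∀ i ∈ Finset.univ, g i * y i - g i * x i ≤
          (g k / c k) * (c i * (y i - x i)) := by
        intro i _
        have hci := (hc i).ne'
        have h2 : g i * y i - g i * x i = (g i / c i) * (c i * (y i - x i)) := by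
          field_simp
        rw [h2]
        have hcyx : 0 ≤ c i * (y i - x i) :=
          mul_nonneg (hc i).le (sub_nonneg.mpr (hxy i))
        exact mul_le_mul_of_nonneg_right (hk i) hcyx
      calc ∑ i, (g i * y i - g i * x i) ≤ ∑ i, (g k / c k) * (c i * (y i - x i)) :=
            Finset.sum_le_sum h1
        _ = (g k / c k) * ∑ i, c i * (y i - x i) := by rw [Finset.mul_sum]
        _ ≤ (g k / c k) * 1 := mul_le_mul_of_nonneg_left hcost hM
        _ = g k / c k := mul_one _
    linarith
  · intro h
    refine ⟨fun i => if i = k then x k + 1 / c k else x i, ?_, ?_, ?_⟩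
    · intro i
      by_cases hik : i = k
      · subst hik; simp [one_div, (inv_pos.mpr (hc i)).le]
      · simp [hik]
    · have hterm : ∀ i, g i * (if i = k then x k + 1 / c k else x i) =
          g i * x i + (if i = k then g k * (1 / c k) else 0) := by
        intro i
        by_cases hik : i = k
        · subst hik; simp; ring
        · simp [hik]
      have hsum : ∑ i, g i * (if i = k then x k + 1 / c k else x i) =
          (∑ i, g i * x i) + g k * (1 / c k) := by
        rw [Finset.sum_congr rfl fun i _ => hterm i, Finset.sum_add_distrib,
          Finset.sum_ite_eq' Finset.univ k fun _ => g k * (1 / c k)]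
        simp
      rw [hsum]
      have : g k * (1 / c k) = g k / c k := by ring
      linarith [this]
    · have hterm : ∀ i, c i * ((if i = k then x k + 1 / c k else x i) - x i) =
          (if i = k then (1:ℝ) else 0) := by
        intro i
        by_cases hik : i = k
        · subst hik; simp [mul_inv_cancel₀ (hc i).ne']
        · simp [hik]
      rw [Finset.sum_congr rfl fun i _ => hterm i,
        Finset.sum_ite_eq' Finset.univ k fun _ => (1:ℝ)]
      simp
end

section
/- Let d ≥ 1, let w ∈ ℝ^d be nonzero with all coordinates w_i ≥ 0, let c ∈ ℝ^d have all coordinates c_i > 0, let τ ∈ ℝ, and let k ∈ argmax_{i∈[d]} w_i/c_i. Then the shifted classifier accepting y iff w·y ≥ τ + w_k/c_k perfectly classifies a strategic population with true boundary w·x ≥ τ and linear cost Σᵢ c_i(y_i − x_i): (i) for every x with w·x ≥ τ there exists y ≥ x componentwise with Σᵢ c_i(y_i − x_i) ≤ 1 and w·y ≥ τ + w_k/c_k; and (ii) for every x with w·x < τ and every y ≥ x with Σᵢ c_i(y_i − x_i) ≤ 1, it holds that w·y < τ + w_k/c_k. -/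
/-- Shifting the true boundary w·x ≥ τ outward by the maximal one-unit-cost
displacement w_k/c_k (k ∈ argmax_i w_i/c_i) yields a perfect classifier for a strategic
population with linear cost: (i) every true positive can reach the shifted boundary at
cost at most 1; (ii) no true negative can. -/
theorem shifted_boundary_perfect (d : ℕ) (hd : 1 ≤ d)
    (w c : Fin d → ℝ)
    (hw : ∀ i, 0 ≤ w i) (hwne : w ≠ 0) (hc : ∀ i, 0 < c i)
    (τ : ℝ) (k : Fin d) (hk : ∀ i, w i / c i ≤ w k / c k) :
    (∀ x : Fin d → ℝ, τ ≤ ∑ i, w i * x i →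
      ∃ y : Fin d → ℝ, (∀ i, x i ≤ y i) ∧ (∑ i, c i * (y i - x i)) ≤ 1 ∧
        τ + w k / c k ≤ ∑ i, w i * y i) ∧
    (∀ x : Fin d → ℝ, (∑ i, w i * x i) < τ →
      ∀ y : Fin d → ℝ, (∀ i, x i ≤ y i) → (∑ i, c i * (y i - x i)) ≤ 1 →
        (∑ i, w i * y i) < τ + w k / c k) := by
  have hck := hc k
  constructor
  · intro x hx
    refine ⟨fun i => x i + if i = k then 1 / c k else 0, ?_, ?_, ?_⟩
    · intro i
      have : (0:ℝ) ≤ if i = k then 1 / c k else 0 := by positivity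
      linarith
    · have : (∑ i, c i * ((x i + if i = k then 1 / c k else 0) - x i))
          = ∑ i, (if i = k then c i * (1 / c k) else 0) := by
        apply Finset.sum_congr rfl; intro i _
        by_cases h : i = k <;> simp [h]
      rw [this, Finset.sum_ite_eq' (Finset.univ) k (fun i => c i * (1 / c k))]
      simp [Finset.mem_univ]
      rw [mul_inv_cancel₀ (ne_of_gt hck)]
    · have : (∑ i, w i * (x i + if i = k then 1 / c k else 0))
          = (∑ i, w i * x i) + ∑ i, (if i = k then w i * (1 / c k) else 0) := by
        rw [← Finset.sum_add_distrib]
        apply Finset.sum_congr rfl; intro i _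
        by_cases h : i = k <;> simp [h] <;> ring
      rw [this, Finset.sum_ite_eq' (Finset.univ) k (fun i => w i * (1 / c k))]
      simp only [Finset.mem_univ, if_true, mul_one_div]
      linarith
  · intro x hx y hxy hcost
    have hwk : 0 ≤ w k / c k := div_nonneg (hw k) hck.le
    have key : (∑ i, w i * y i) - (∑ i, w i * x i) ≤ (w k / c k) * ∑ i, c i * (y i - x i) := by
      rw [← Finset.sum_sub_distrib, Finset.mul_sum]
      apply Finset.sum_le_sum
      intro i _
      have h1 : w i * y i - w i * x i = (w i / c i) * (c i * (y i - x i)) := by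
        rw [← mul_assoc, div_mul_cancel₀ _ (ne_of_gt (hc i))]; ring
      rw [h1]
      exact mul_le_mul_of_nonneg_right (hk i)
        (mul_nonneg (hc i).le (by linarith [hxy i]))
    have h2 : (w k / c k) * ∑ i, c i * (y i - x i) ≤ w k / c k := by
      calc (w k / c k) * ∑ i, c i * (y i - x i) ≤ (w k / c k) * 1 :=
        mul_le_mul_of_nonneg_left hcost hwk
      _ = w k / c k := mul_one _
    linarith
end

section
/- Let c_B : ℝ → ℝ be strictly increasing, let β ∈ (0,1), and let σ₁, σ₂ ∈ ℝ satisfy c_B(σ₂) = c_B(σ₁) + 1/β − 1 (so that the effective threshold on unmanipulated group-B features under the proportional subsidy β with published threshold σ₂ coincides with the effective threshold without subsidy at published threshold σ₁). Then for every x with 0 < c_B(σ₁) − c_B(x) < 1, the subsidized cost of manipulating to the new threshold strictly exceeds the original cost: β·(c_B(σ₂) − c_B(x)) > c_B(σ₁) − c_B(x). -/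
/-- If the subsidized effective threshold coincides with the unsubsidized
one (c_B(σ₂) = c_B(σ₁) + 1/β − 1), every candidate who must pay positive cost < 1 to
reach σ₁ pays strictly more (after subsidy) to reach σ₂. -/
theorem subsidy_increases_cost (cB : ℝ → ℝ) (hmono : StrictMono cB)
    (β : ℝ) (hβ : β ∈ Set.Ioo (0 : ℝ) 1)
    (σ₁ σ₂ : ℝ) (h : cB σ₂ = cB σ₁ + 1 / β - 1) :
    ∀ x : ℝ, 0 < cB σ₁ - cB x → cB σ₁ - cB x < 1 →
      cB σ₁ - cB x < β * (cB σ₂ - cB x) := by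
  obtain ⟨hβ0, hβ1⟩ := hβ
  intro x h1 h2
  have hβ' : β * (1 / β) = 1 := by field_simp
  rw [h]
  nlinarith [mul_pos hβ0 h1]
end

section
/- Let group B have linear cost c_B(x) = b·x with b > 0, let β ∈ (0,1), and let σ₂ = σ₁ + (1/b)(1/β − 1). Define the no-subsidy payoff u₁(x) = 1 − max{0, b(σ₁ − x)} and the subsidy-regime payoff u₂(x) = 1 − max{0, β·b(σ₂ − x)} for candidates with x ≥ σ₁ − 1/b (the common set of accepted candidates, since the effective threshold ℓ_B(σ₁) = σ₁ − 1/b equals ℓ_B^β(σ₂)). Then u₂(x) ≤ u₁(x) for every x ≥ σ₁ − 1/b, with strict inequality for every x ∈ (σ₁ − 1/b, σ₂); hence every group-B candidate is weakly worse off under the subsidy, and all candidates who must manipulate are strictly worse off. -/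
/-!
Since `σ₂ = σ₁ + (1/b)(1/β − 1)`, the subsidised cost of reaching `σ₂` exceeds the unsubsidised
cost of reaching `σ₁` by exactly `(1 − β)(1 − b(σ₁ − x))`: a fraction `1 − β` of the slack that
the candidate has left in her budget of 1. The slack is nonnegative exactly on the accepted set
and positive off its boundary, and the payoff `1 − max 0 c` is antitone in the cost `c`.
-/

lemma sub_one_div_le_iff_mul_sub_le_one {b σ x : ℝ} (hb : 0 < b) :
    σ - 1 / b ≤ x ↔ b * (σ - x) ≤ 1 := by
  rw [sub_le_comm, le_div_iff₀' hb]

lemma sub_one_div_lt_iff_mul_sub_lt_one {b σ x : ℝ} (hb : 0 < b) :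
    σ - 1 / b < x ↔ b * (σ - x) < 1 := by
  rw [sub_lt_comm, lt_div_iff₀' hb]

lemma subsidized_cost_eq {b β σ₁ σ₂ : ℝ} (hb : b ≠ 0) (hβ : β ≠ 0)
    (hσ₂ : σ₂ = σ₁ + 1 / b * (1 / β - 1)) (x : ℝ) :
    β * b * (σ₂ - x) = b * (σ₁ - x) + (1 - β) * (1 - b * (σ₁ - x)) := by
  subst hσ₂
  field_simp
  ring

lemma max_lt_max_left_of_lt {α : Type*} [LinearOrder α] {a b c : α} (h : b < c) (ha : a < c) :
    max a b < max a c :=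
  (max_lt ha h).trans_le (le_max_right a c)

/-- With linear group-B costs, a proportional subsidy β accompanied by the
threshold increase σ₂ = σ₁ + (1/b)(1/β − 1) (keeping the accepted set fixed) makes every
accepted group-B candidate weakly worse off, and strictly worse off whenever she must
manipulate. -/
theorem subsidy_harms_groupB (b β σ₁ σ₂ : ℝ) (hb : 0 < b)
    (hβ : β ∈ Set.Ioo (0 : ℝ) 1)
    (hσ₂ : σ₂ = σ₁ + (1 / b) * (1 / β - 1))
    (u₁ u₂ : ℝ → ℝ)
    (hu₁ : ∀ x, u₁ x = 1 - max 0 (b * (σ₁ - x)))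
    (hu₂ : ∀ x, u₂ x = 1 - max 0 (β * b * (σ₂ - x))) :
    (∀ x, σ₁ - 1 / b ≤ x → u₂ x ≤ u₁ x) ∧
    (∀ x, σ₁ - 1 / b < x → x < σ₂ → u₂ x < u₁ x) := by
  obtain ⟨hβ₀, hβ₁⟩ := hβ
  have hcost := subsidized_cost_eq hb.ne' hβ₀.ne' hσ₂
  refine ⟨fun x hx => ?_, fun x hx hx₂ => ?_⟩
  · have hslack : 0 ≤ 1 - b * (σ₁ - x) :=
      sub_nonneg.2 ((sub_one_div_le_iff_mul_sub_le_one hb).1 hx)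
    have hle : b * (σ₁ - x) ≤ β * b * (σ₂ - x) := by
      rw [hcost]
      exact le_add_of_nonneg_right (mul_nonneg (sub_nonneg.2 hβ₁.le) hslack)
    rw [hu₁, hu₂]
    exact sub_le_sub_left (max_le_max_left 0 hle) 1
  · have hslack : 0 < 1 - b * (σ₁ - x) :=
      sub_pos.2 ((sub_one_div_lt_iff_mul_sub_lt_one hb).1 hx)
    have hlt : b * (σ₁ - x) < β * b * (σ₂ - x) := by
      rw [hcost]
      exact lt_add_of_pos_right _ (mul_pos (sub_pos.2 hβ₁) hslack)
    have hpos : 0 < β * b * (σ₂ - x) := mul_pos (mul_pos hβ₀ hb) (sub_pos.2 hx₂)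
    rw [hu₁, hu₂]
    exact sub_lt_sub_left (max_lt_max_left_of_lt hlt hpos) 1
end
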